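/- For scalar bounded coercive spectral densities Φ, Ψ on the unit circle, the multivariable Hellinger distance inf{‖w_φ − w_ψ‖₂ : |w_φ|² = Φ, |w_ψ|² = Ψ} equals [∫ (√Φ − √Ψ)² dθ/2π]^{1/2}. -/

import Mathlib

/-!
Any factors satisfy `|wφ| = √Φ` and `|wψ| = √Ψ` a.e., so the reverse triangle inequality
`(|wφ| - |wψ|)² ≤ |wφ - wψ|²` bounds the distance below by `‖√Φ - √Ψ‖₂`; the nonnegative
factors `√Φ` and `√Ψ` attain this bound.
-/

open MeasureTheory

/-- Normalized Lebesgue measure dθ/2π on one period, modeling the unit circle. -/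
noncomputable def muT : Measure ℝ :=
  (ENNReal.ofReal (2 * Real.pi)⁻¹) • (volume.restrict (Set.Ioc 0 (2 * Real.pi)))

/-- w ∈ L₂(𝕋) is a scalar spectral factor of the density Φ : |w|² = Φ a.e. -/
def IsScalarFactor (w : ℝ → ℂ) (Φ : ℝ → ℝ) : Prop :=
  Measurable w ∧ Integrable (fun θ => ‖w θ‖ ^ 2) muT ∧
  (∀ᵐ θ ∂muT, ‖w θ‖ ^ 2 = Φ θ)

instance : IsFiniteMeasure muT := by
  refine ⟨?_⟩
  rw [muT, Measure.smul_apply, smul_eq_mul,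
    Measure.restrict_apply MeasurableSet.univ, Set.univ_inter, Real.volume_Ioc]
  exact ENNReal.mul_lt_top ENNReal.ofReal_lt_top ENNReal.ofReal_lt_top

lemma sq_norm_sub_norm_le {E : Type*} [SeminormedAddCommGroup E] (a b : E) :
    (‖a‖ - ‖b‖) ^ 2 ≤ ‖a - b‖ ^ 2 := by
  rw [← sq_abs]
  exact pow_le_pow_left₀ (abs_nonneg _) (abs_norm_sub_norm_le a b) 2

namespace IsScalarFactor

variable {w wφ wψ : ℝ → ℂ} {Φ Ψ : ℝ → ℝ}

lemma sqrt_ae_eq_norm (hw : IsScalarFactor w Φ) : ∀ᵐ θ ∂muT, Real.sqrt (Φ θ) = ‖w θ‖ := by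
  filter_upwards [hw.2.2] with θ hθ
  rw [← hθ, Real.sqrt_sq (norm_nonneg _)]

lemma memLp_two (hw : IsScalarFactor w Φ) : MemLp w 2 muT :=
  (memLp_two_iff_integrable_sq_norm hw.1.aestronglyMeasurable).2 hw.2.1

lemma integrable_sq_norm_sub (hφ : IsScalarFactor wφ Φ) (hψ : IsScalarFactor wψ Ψ) :
    Integrable (fun θ => ‖wφ θ - wψ θ‖ ^ 2) muT :=
  (memLp_two_iff_integrable_sq_norm (hφ.1.sub hψ.1).aestronglyMeasurable).1
    (hφ.memLp_two.sub hψ.memLp_two)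

lemma sq_sqrt_sub_sqrt_ae_le (hφ : IsScalarFactor wφ Φ) (hψ : IsScalarFactor wψ Ψ) :
    ∀ᵐ θ ∂muT, (Real.sqrt (Φ θ) - Real.sqrt (Ψ θ)) ^ 2 ≤ ‖wφ θ - wψ θ‖ ^ 2 := by
  filter_upwards [hφ.sqrt_ae_eq_norm, hψ.sqrt_ae_eq_norm] with θ h₁ h₂
  rw [h₁, h₂]
  exact sq_norm_sub_norm_le _ _

lemma integral_sq_sqrt_sub_sqrt_le (hφ : IsScalarFactor wφ Φ) (hψ : IsScalarFactor wψ Ψ)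
    (hΦm : Measurable Φ) (hΨm : Measurable Ψ) :
    ∫ θ, (Real.sqrt (Φ θ) - Real.sqrt (Ψ θ)) ^ 2 ∂muT ≤ ∫ θ, ‖wφ θ - wψ θ‖ ^ 2 ∂muT := by
  have hle := hφ.sq_sqrt_sub_sqrt_ae_le hψ
  have hint : Integrable (fun θ => (Real.sqrt (Φ θ) - Real.sqrt (Ψ θ)) ^ 2) muT := by
    refine (hφ.integrable_sq_norm_sub hψ).mono
      ((hΦm.sqrt.sub hΨm.sqrt).pow_const 2).aestronglyMeasurable ?_
    filter_upwards [hle] with θ hθ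
    rwa [Real.norm_of_nonneg (sq_nonneg _), Real.norm_of_nonneg (sq_nonneg _)]
  exact integral_mono_ae hint (hφ.integrable_sq_norm_sub hψ) hle

end IsScalarFactor

lemma isScalarFactor_ofReal_sqrt {Φ : ℝ → ℝ} (hm : Measurable Φ) (h0 : ∀ θ, 0 ≤ Φ θ)
    (hi : Integrable Φ muT) : IsScalarFactor (fun θ => (Real.sqrt (Φ θ) : ℂ)) Φ := by
  have hsq : (fun θ => ‖(Real.sqrt (Φ θ) : ℂ)‖ ^ 2) = Φ := by
    funext θ
    rw [Complex.norm_real, Real.norm_eq_abs, sq_abs, Real.sq_sqrt (h0 θ)]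
  exact ⟨Complex.measurable_ofReal.comp hm.sqrt, by rwa [hsq], ae_of_all _ (congrFun hsq)⟩

lemma integrable_muT_of_nonneg_of_le {Φ : ℝ → ℝ} (hm : Measurable Φ) (h0 : ∀ θ, 0 ≤ Φ θ)
    {C : ℝ} (hC : ∀ θ, Φ θ ≤ C) : Integrable Φ muT :=
  Integrable.of_bound hm.aestronglyMeasurable C
    (ae_of_all _ fun θ => by rw [Real.norm_of_nonneg (h0 θ)]; exact hC θ)

theorem stmt_11_general (Φ Ψ : ℝ → ℝ)
    (hΦm : Measurable Φ) (hΨm : Measurable Ψ)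
    (hΦb : ∃ C : ℝ, ∀ θ, Φ θ ≤ C) (hΨb : ∃ C : ℝ, ∀ θ, Ψ θ ≤ C)
    (hΦc : ∃ c : ℝ, 0 < c ∧ ∀ θ, c ≤ Φ θ) (hΨc : ∃ c : ℝ, 0 < c ∧ ∀ θ, c ≤ Ψ θ) :
    sInf {r : ℝ | ∃ wφ wψ, IsScalarFactor wφ Φ ∧ IsScalarFactor wψ Ψ ∧
        r = Real.sqrt (∫ θ, ‖wφ θ - wψ θ‖ ^ 2 ∂muT)} =
      Real.sqrt (∫ θ, (Real.sqrt (Φ θ) - Real.sqrt (Ψ θ)) ^ 2 ∂muT) := by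
  obtain ⟨CΦ, hCΦ⟩ := hΦb
  obtain ⟨CΨ, hCΨ⟩ := hΨb
  obtain ⟨cΦ, hcΦ, hΦc⟩ := hΦc
  obtain ⟨cΨ, hcΨ, hΨc⟩ := hΨc
  have hΦ0 : ∀ θ, 0 ≤ Φ θ := fun θ => hcΦ.le.trans (hΦc θ)
  have hΨ0 : ∀ θ, 0 ≤ Ψ θ := fun θ => hcΨ.le.trans (hΨc θ)
  refine IsLeast.csInf_eq ⟨⟨_, _, isScalarFactor_ofReal_sqrt hΦm hΦ0
      (integrable_muT_of_nonneg_of_le hΦm hΦ0 hCΦ), isScalarFactor_ofReal_sqrt hΨm hΨ0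
      (integrable_muT_of_nonneg_of_le hΨm hΨ0 hCΨ), ?_⟩, ?_⟩
  · simp_rw [← Complex.ofReal_sub, Complex.norm_real, Real.norm_eq_abs, sq_abs]
  · rintro r ⟨wφ, wψ, hφ, hψ, rfl⟩
    exact Real.sqrt_le_sqrt (hφ.integral_sq_sqrt_sub_sqrt_le hψ hΦm hΨm)

theorem stmt_11 (Φ Ψ : ℝ → ℝ)
    (hΦm : Measurable Φ) (hΨm : Measurable Ψ)
    (hΦp : Function.Periodic Φ (2 * Real.pi)) (hΨp : Function.Periodic Ψ (2 * Real.pi))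
    (hΦb : ∃ C : ℝ, ∀ θ, Φ θ ≤ C) (hΨb : ∃ C : ℝ, ∀ θ, Ψ θ ≤ C)
    (hΦc : ∃ c : ℝ, 0 < c ∧ ∀ θ, c ≤ Φ θ) (hΨc : ∃ c : ℝ, 0 < c ∧ ∀ θ, c ≤ Ψ θ) :
    sInf {r : ℝ | ∃ wφ wψ, IsScalarFactor wφ Φ ∧ IsScalarFactor wψ Ψ ∧
        r = Real.sqrt (∫ θ, ‖wφ θ - wψ θ‖ ^ 2 ∂muT)} =
      Real.sqrt (∫ θ, (Real.sqrt (Φ θ) - Real.sqrt (Ψ θ)) ^ 2 ∂muT) :=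
  stmt_11_general Φ Ψ hΦm hΨm hΦb hΨb hΦc hΨc
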